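/- Let A ⊆ ℝ³ be a union of planes each making a 45° angle with every horizontal plane {y = h} (planes with normal vector whose y-component has absolute value equal to 1/√2 times its norm), let A_δ = A + ((−δ,δ) × {0} × (−δ,δ)) (Minkowski sum), and define f_δ(h) = λ₂(A_δ ∩ ([−N,N] × {h} × [−N,N])) for h ∈ [0,1], where λ₂ is two-dimensional Lebesgue measure. Then for all δ, t > 0 and h₁, h₂ ∈ [0,1] with |h₁ − h₂| < t, one has f_{δ+t}(h₁) ≥ f_δ(h₂). -/

import Mathlib

open MeasureTheory Pointwise ENNReal

/-! A plane whose normal makes a 45° angle with the `y`-axis satisfies `n₂² = n₁² + n₃²`, so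
moving a point of it by `Δ` in the `y`-direction can be compensated, inside the plane, by a
horizontal move of size at most `|Δ|` in each coordinate. Hence the slice of `A_δ` at height `h₂`
lies in the slice of `A_{δ+t}` at height `h₁` whenever `|h₁ - h₂| < t`, and the measure inequality
is monotonicity. -/

lemma sq_eq_add_sq_of_abs_eq_sqrt_div_sqrt_two {a b c : ℝ}
    (h : |b| = Real.sqrt (a ^ 2 + b ^ 2 + c ^ 2) / Real.sqrt 2) : b ^ 2 = a ^ 2 + c ^ 2 := by
  have hsq : |b| ^ 2 = (a ^ 2 + b ^ 2 + c ^ 2) / 2 := by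
    rw [h, div_pow, Real.sq_sqrt (by positivity), Real.sq_sqrt zero_le_two]
  rw [sq_abs] at hsq
  linarith

lemma exists_horizontal_compensation {n₁ n₂ n₃ : ℝ} (hn : n₂ ^ 2 = n₁ ^ 2 + n₃ ^ 2) (Δ : ℝ) :
    ∃ u w : ℝ, |u| ≤ |Δ| ∧ |w| ≤ |Δ| ∧ u * n₁ + Δ * n₂ + w * n₃ = 0 := by
  by_cases hn₂ : n₂ = 0
  · have hn₁ : n₁ = 0 := by nlinarith [sq_nonneg n₁, sq_nonneg n₃]
    exact ⟨0, 0, by simp, by simp, by simp [hn₁, hn₂]⟩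
  have bound : ∀ m, |m| ≤ |n₂| → |-Δ * m / n₂| ≤ |Δ| := fun m hm => by
    rw [abs_div, abs_mul, abs_neg, div_le_iff₀ (abs_pos.2 hn₂)]
    exact mul_le_mul_of_nonneg_left hm (abs_nonneg Δ)
  refine ⟨-Δ * n₁ / n₂, -Δ * n₃ / n₂, bound _ (sq_le_sq.1 ?_), bound _ (sq_le_sq.1 ?_), ?_⟩
  · nlinarith [sq_nonneg n₃]
  · nlinarith [sq_nonneg n₁]
  · field_simp
    linear_combination Δ * hn

lemma plane_add_mem_of_dot_eq_zero {P n a v : ℝ × ℝ × ℝ}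
    (ha : (a.1 - P.1) * n.1 + (a.2.1 - P.2.1) * n.2.1 + (a.2.2 - P.2.2) * n.2.2 = 0)
    (hv : v.1 * n.1 + v.2.1 * n.2.1 + v.2.2 * n.2.2 = 0) :
    ((a + v).1 - P.1) * n.1 + ((a + v).2.1 - P.2.1) * n.2.1 +
      ((a + v).2.2 - P.2.2) * n.2.2 = 0 := by
  simp only [Prod.fst_add, Prod.snd_add]
  linear_combination ha + hv

def horizontalThickening (A : Set (ℝ × ℝ × ℝ)) (δ : ℝ) : Set (ℝ × ℝ × ℝ) :=
  A + Set.Ioo (-δ) δ ×ˢ ({0} : Set ℝ) ×ˢ Set.Ioo (-δ) δ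

lemma mem_horizontalThickening_of_mem_of_abs_sub_lt {A : Set (ℝ × ℝ × ℝ)}
    (hA : ∀ a ∈ A, ∀ Δ : ℝ, ∃ u w : ℝ, |u| ≤ |Δ| ∧ |w| ≤ |Δ| ∧ a + (u, Δ, w) ∈ A)
    {δ t h₁ h₂ x z : ℝ} (hh : |h₁ - h₂| < t) (hmem : (x, h₂, z) ∈ horizontalThickening A δ) :
    (x, h₁, z) ∈ horizontalThickening A (δ + t) := by
  obtain ⟨a, ha, e, he, hae⟩ := hmem
  obtain ⟨u, w, hu, hw, hshift⟩ := hA a ha (h₁ - h₂)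
  obtain ⟨hu, hu'⟩ := abs_lt.1 (hu.trans_lt hh)
  obtain ⟨hw, hw'⟩ := abs_lt.1 (hw.trans_lt hh)
  obtain ⟨⟨he₁, he₁'⟩, he₂, he₃, he₃'⟩ := he
  refine ⟨_, hshift, (e.1 - u, 0, e.2.2 - w),
    ⟨⟨by linarith, by linarith⟩, rfl, by linarith, by linarith⟩, ?_⟩
  simp only [Set.mem_singleton_iff] at he₂
  simp only [Prod.ext_iff, Prod.fst_add, Prod.snd_add] at hae ⊢
  refine ⟨?_, ?_, ?_⟩ <;> linarith

theorem stmt_11_general (N : ℝ) (ι : Type*) (P n : ι → ℝ × ℝ × ℝ)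
    (hn : ∀ i, n i ≠ 0 ∧ |(n i).2.1| =
      Real.sqrt ((n i).1 ^ 2 + (n i).2.1 ^ 2 + (n i).2.2 ^ 2) / Real.sqrt 2)
    (A : Set (ℝ × ℝ × ℝ))
    (hA : A = ⋃ i, {q : ℝ × ℝ × ℝ |
      (q.1 - (P i).1) * (n i).1 + (q.2.1 - (P i).2.1) * (n i).2.1 +
        (q.2.2 - (P i).2.2) * (n i).2.2 = 0})
    (f : ℝ → ℝ → ℝ≥0∞)
    (hf : ∀ δ h, f δ h = volume {p : ℝ × ℝ |
      (p.1, h, p.2) ∈ A + (Set.Ioo (-δ) δ) ×ˢ ({0} : Set ℝ) ×ˢ Set.Ioo (-δ) δ ∧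
      p.1 ∈ Set.Icc (-N) N ∧ p.2 ∈ Set.Icc (-N) N}) :
    ∀ δ t h₁ h₂ : ℝ, 0 < δ → 0 < t → h₁ ∈ Set.Icc (0 : ℝ) 1 → h₂ ∈ Set.Icc (0 : ℝ) 1 →
      |h₁ - h₂| < t → f δ h₂ ≤ f (δ + t) h₁ := by
  have compensate : ∀ a ∈ A, ∀ Δ : ℝ, ∃ u w : ℝ, |u| ≤ |Δ| ∧ |w| ≤ |Δ| ∧ a + (u, Δ, w) ∈ A := by
    intro a ha Δ
    rw [hA] at ha ⊢
    obtain ⟨i, hi⟩ := Set.mem_iUnion.1 ha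
    obtain ⟨u, w, hu, hw, hdot⟩ :=
      exists_horizontal_compensation (sq_eq_add_sq_of_abs_eq_sqrt_div_sqrt_two (hn i).2) Δ
    exact ⟨u, w, hu, hw, Set.mem_iUnion.2 ⟨i, plane_add_mem_of_dot_eq_zero hi hdot⟩⟩
  intro δ t h₁ h₂ _ _ _ _ hh
  rw [hf, hf]
  exact measure_mono fun p ⟨hp, hx, hz⟩ =>
    ⟨mem_horizontalThickening_of_mem_of_abs_sub_lt compensate hh hp, hx, hz⟩

/-- If A ⊆ ℝ³ is a union of planes each making a 45° angle with the horizontal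
planes {y = h} (the y-component of the normal has absolute value ‖n‖/√2),
A_δ = A + (−δ,δ)×{0}×(−δ,δ), and f_δ(h) is the planar measure of
A_δ ∩ ([−N,N]×{h}×[−N,N]), then |h₁ − h₂| < t implies f_{δ+t}(h₁) ≥ f_δ(h₂). -/
theorem stmt_11 (N : ℝ) (hN : 0 < N) (ι : Type*) (P n : ι → ℝ × ℝ × ℝ)
    (hn : ∀ i, n i ≠ 0 ∧ |(n i).2.1| =
      Real.sqrt ((n i).1 ^ 2 + (n i).2.1 ^ 2 + (n i).2.2 ^ 2) / Real.sqrt 2)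
    (A : Set (ℝ × ℝ × ℝ))
    (hA : A = ⋃ i, {q : ℝ × ℝ × ℝ |
      (q.1 - (P i).1) * (n i).1 + (q.2.1 - (P i).2.1) * (n i).2.1 +
        (q.2.2 - (P i).2.2) * (n i).2.2 = 0})
    (f : ℝ → ℝ → ℝ≥0∞)
    (hf : ∀ δ h, f δ h = volume {p : ℝ × ℝ |
      (p.1, h, p.2) ∈ A + (Set.Ioo (-δ) δ) ×ˢ ({0} : Set ℝ) ×ˢ Set.Ioo (-δ) δ ∧
      p.1 ∈ Set.Icc (-N) N ∧ p.2 ∈ Set.Icc (-N) N}) :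
    ∀ δ t h₁ h₂ : ℝ, 0 < δ → 0 < t → h₁ ∈ Set.Icc (0 : ℝ) 1 → h₂ ∈ Set.Icc (0 : ℝ) 1 →
      |h₁ - h₂| < t → f δ h₂ ≤ f (δ + t) h₁ :=
  stmt_11_general N ι P n hn A hA f hf
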